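/- arXiv:1802.09668 — 2 statements merged into one kernel-verified Lean document; each statement's English description precedes it below -/
import Mathlib

section
/- Let D ⊂ R^d be a bounded domain and ρ ∈ L^∞(D) nonnegative. There exists C depending only on D such that for all 0 ≤ ε' ≤ ε, sup_{x∈D} |(F_ε * ρ)(x) − (F_{ε'} * ρ)(x)| ≤ C ε ‖ρ‖_{L^∞(D)}. -/
/-!
The two regularized forces agree outside the ball of radius `ε`, and inside it each is bounded
by `C_* / |z|^(d-1)`. So the difference of the convolutions at `x` is bounded by
`2 C_* M ∫_{B(x,ε)} |x - y|^(1-d) dy`, and in polar coordinates this integral is exactly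
`d |B(0,1)| ε`: the singularity `r^(1-d)` cancels the surface factor `r^(d-1)`.
-/

open Real MeasureTheory Metric Module Set

theorem ball_indicator_comp_sub {E β : Type*} [SeminormedAddCommGroup E] [Zero β] (x : E) (r : ℝ)
    (f : E → β) :
    (ball x r).indicator (fun y => f (x - y)) = fun y => (ball 0 r).indicator f (x - y) := by
  ext y
  simp only [indicator, mem_ball, dist_eq_norm, norm_sub_rev, sub_zero]

section Kernel

variable {E : Type*} [NormedAddCommGroup E] [NormedSpace ℝ E] [FiniteDimensional ℝ E]
  [MeasurableSpace E] [BorelSpace E] [Nontrivial E] (μ : Measure E) [μ.IsAddHaarMeasure]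

theorem integrableOn_inv_norm_pow_ball (r : ℝ) :
    IntegrableOn (fun y : E => (‖y‖ ^ (finrank ℝ E - 1))⁻¹) (ball 0 r) μ := by
  rw [integrableOn_fun_norm_addHaar μ (f := fun t => (t ^ (finrank ℝ E - 1))⁻¹)]
  refine (integrableOn_const (C := (1 : ℝ)) measure_Ioo_lt_top.ne).congr_fun
    (fun t ht => ?_) measurableSet_Ioo
  simp [smul_eq_mul, mul_inv_cancel₀ (pow_ne_zero _ (ne_of_gt ht.1))]

theorem integral_inv_norm_pow_ball {r : ℝ} (hr : 0 ≤ r) :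
    ∫ y in ball (0 : E) r, (‖y‖ ^ (finrank ℝ E - 1))⁻¹ ∂μ =
      finrank ℝ E * μ.real (ball 0 1) * r := by
  have hradial : (ball (0 : E) r).indicator (fun y => (‖y‖ ^ (finrank ℝ E - 1))⁻¹) =
      fun y => (Iio r).indicator (fun t => (t ^ (finrank ℝ E - 1))⁻¹) ‖y‖ := by
    ext y
    simp only [indicator, mem_ball_zero_iff, mem_Iio]
  have hcancel : ∫ t in Ioi (0 : ℝ), t ^ (finrank ℝ E - 1) •
      (Iio r).indicator (fun t => (t ^ (finrank ℝ E - 1))⁻¹) t =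
      ∫ t in Ioi (0 : ℝ), (Iio r).indicator (fun _ => (1 : ℝ)) t := by
    refine setIntegral_congr_fun measurableSet_Ioi fun t ht => ?_
    by_cases htr : t < r
    · simp [indicator, htr, mul_inv_cancel₀ (pow_ne_zero _ (ne_of_gt (mem_Ioi.1 ht)))]
    · simp [indicator, htr]
  rw [← integral_indicator measurableSet_ball, hradial, integral_fun_norm_addHaar, hcancel,
    setIntegral_indicator measurableSet_Iio, Ioi_inter_Iio, setIntegral_const,
    Real.volume_real_Ioo_of_le hr]
  simp only [sub_zero, smul_eq_mul, mul_one, nsmul_eq_mul]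
  ring

theorem integrableOn_inv_norm_sub_pow_ball (x : E) (r : ℝ) :
    IntegrableOn (fun y => (‖x - y‖ ^ (finrank ℝ E - 1))⁻¹) (ball x r) μ := by
  rw [← integrable_indicator_iff measurableSet_ball,
    ball_indicator_comp_sub x r fun z => (‖z‖ ^ (finrank ℝ E - 1))⁻¹]
  exact ((integrable_indicator_iff measurableSet_ball).2
    (integrableOn_inv_norm_pow_ball μ r)).comp_sub_left x

theorem integral_inv_norm_sub_pow_ball (x : E) {r : ℝ} (hr : 0 ≤ r) :
    ∫ y in ball x r, (‖x - y‖ ^ (finrank ℝ E - 1))⁻¹ ∂μ =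
      finrank ℝ E * μ.real (ball 0 1) * r := by
  rw [← integral_indicator measurableSet_ball,
    ball_indicator_comp_sub x r fun z => (‖z‖ ^ (finrank ℝ E - 1))⁻¹,
    integral_sub_left_eq_self (fun y => (ball (0 : E) r).indicator _ y) μ x,
    integral_indicator measurableSet_ball, integral_inv_norm_pow_ball μ hr]

theorem integrableOn_smul_comp_sub {G : E → E} {K : ℝ} (hG : Measurable G)
    (hGK : ∀ z, z ≠ 0 → ‖G z‖ ≤ K / ‖z‖ ^ (finrank ℝ E - 1))
    {D : Set E} (hDb : Bornology.IsBounded D) (hDm : MeasurableSet D)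
    {ρ : E → ℝ} {M : ℝ} (hρ : Measurable ρ) (hρ0 : ∀ y, 0 ≤ ρ y) (hρM : ∀ y ∈ D, ρ y ≤ M)
    (x : E) :
    IntegrableOn (fun y => ρ y • G (x - y)) D μ := by
  obtain ⟨R, hDR⟩ := hDb.subset_ball x
  have hbound : IntegrableOn (fun y => M * (K * (‖x - y‖ ^ (finrank ℝ E - 1))⁻¹)) D μ :=
    ((integrableOn_inv_norm_sub_pow_ball μ x R).mono_set hDR).const_mul K |>.const_mul M
  refine hbound.mono'
    (hρ.smul (hG.comp (measurable_const.sub measurable_id))).aestronglyMeasurable ?_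
  filter_upwards [ae_restrict_mem hDm, ae_restrict_of_ae (Measure.ae_ne μ x)] with y hyD hyx
  rw [norm_smul, Real.norm_of_nonneg (hρ0 y), ← div_eq_mul_inv]
  exact mul_le_mul (hρM y hyD) (hGK _ (sub_ne_zero.2 hyx.symm)) (norm_nonneg _)
    ((hρ0 y).trans (hρM y hyD))

theorem norm_setIntegral_smul_comp_sub_sub_le {G₁ G₂ : E → E} {K ε : ℝ}
    (hG₁ : Measurable G₁) (hG₂ : Measurable G₂)
    (hG₁K : ∀ z, z ≠ 0 → ‖G₁ z‖ ≤ K / ‖z‖ ^ (finrank ℝ E - 1))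
    (hG₂K : ∀ z, z ≠ 0 → ‖G₂ z‖ ≤ K / ‖z‖ ^ (finrank ℝ E - 1))
    (hε : 0 ≤ ε) (hG : ∀ z, ε ≤ ‖z‖ → G₁ z = G₂ z)
    {D : Set E} (hDb : Bornology.IsBounded D) (hDm : MeasurableSet D)
    {ρ : E → ℝ} {M : ℝ} (hρ : Measurable ρ) (hρ0 : ∀ y, 0 ≤ ρ y) (hρM : ∀ y ∈ D, ρ y ≤ M)
    (hM : 0 ≤ M) (x : E) :
    ‖(∫ y in D, ρ y • G₁ (x - y) ∂μ) - ∫ y in D, ρ y • G₂ (x - y) ∂μ‖ ≤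
      2 * K * finrank ℝ E * μ.real (ball 0 1) * ε * M := by
  have hK : 0 ≤ K := by
    obtain ⟨z, hz⟩ := exists_ne (0 : E)
    exact (mul_nonneg (norm_nonneg _) (by positivity)).trans
      ((le_div_iff₀ (pow_pos (norm_pos_iff.2 hz) _)).1 (hG₁K z hz))
  set g := (ball x ε).indicator fun y => 2 * K * M * (‖x - y‖ ^ (finrank ℝ E - 1))⁻¹ with hg_def
  have hg : Integrable g μ := (integrable_indicator_iff measurableSet_ball).2
    ((integrableOn_inv_norm_sub_pow_ball μ x ε).const_mul _)
  have hdiff : ∀ᵐ y ∂μ.restrict D, ‖ρ y • G₁ (x - y) - ρ y • G₂ (x - y)‖ ≤ g y := by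
    filter_upwards [ae_restrict_mem hDm, ae_restrict_of_ae (Measure.ae_ne μ x)] with y hyD hyx
    rw [← smul_sub, norm_smul, Real.norm_of_nonneg (hρ0 y)]
    by_cases hy : y ∈ ball x ε
    · have hxy : x - y ≠ 0 := sub_ne_zero.2 hyx.symm
      have hG₁₂ : ‖G₁ (x - y) - G₂ (x - y)‖ ≤ 2 * K * (‖x - y‖ ^ (finrank ℝ E - 1))⁻¹ :=
        calc _ ≤ ‖G₁ (x - y)‖ + ‖G₂ (x - y)‖ := norm_sub_le _ _
          _ ≤ K / ‖x - y‖ ^ (finrank ℝ E - 1) + K / ‖x - y‖ ^ (finrank ℝ E - 1) :=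
            add_le_add (hG₁K _ hxy) (hG₂K _ hxy)
          _ = _ := by ring
      rw [hg_def, indicator_of_mem hy]
      calc _ ≤ M * (2 * K * (‖x - y‖ ^ (finrank ℝ E - 1))⁻¹) :=
            mul_le_mul (hρM y hyD) hG₁₂ (norm_nonneg _) hM
        _ = _ := by ring
    · have hfar : ε ≤ ‖x - y‖ := by rwa [mem_ball, not_lt, dist_eq_norm, norm_sub_rev] at hy
      simp [hg_def, indicator_of_notMem hy, hG _ hfar]
  have hg0 : 0 ≤ᵐ[μ] g := .of_forall fun y => indicator_nonneg (fun y _ => by positivity) y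
  calc _ = ‖∫ y in D, ρ y • G₁ (x - y) - ρ y • G₂ (x - y) ∂μ‖ := by
        rw [integral_sub (integrableOn_smul_comp_sub μ hG₁ hG₁K hDb hDm hρ hρ0 hρM x)
          (integrableOn_smul_comp_sub μ hG₂ hG₂K hDb hDm hρ hρ0 hρM x)]
    _ ≤ ∫ y in D, g y ∂μ := norm_integral_le_of_norm_le hg.integrableOn hdiff
    _ ≤ ∫ y, g y ∂μ := setIntegral_le_integral hg hg0
    _ = 2 * K * M * (finrank ℝ E * μ.real (ball 0 1) * ε) := by
        rw [integral_indicator measurableSet_ball, integral_const_mul,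
          integral_inv_norm_sub_pow_ball μ x hε]
    _ = _ := by ring

end Kernel

theorem convolution_force_regularization_difference_general
    (d : ℕ) (hd : 2 ≤ d)
    (Cstar : ℝ)
    (hCstar : Cstar = Real.Gamma ((d : ℝ) / 2) / (2 * π ^ ((d : ℝ) / 2)))
    (F : EuclideanSpace ℝ (Fin d) → EuclideanSpace ℝ (Fin d))
    (D : Set (EuclideanSpace ℝ (Fin d)))
    (hDb : Bornology.IsBounded D) (hDm : MeasurableSet D) :
    ∃ C : ℝ, 0 < C ∧
      ∀ (ε ε' : ℝ), 0 ≤ ε' → ε' ≤ ε →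
      ∀ (Fε Fε' : EuclideanSpace ℝ (Fin d) → EuclideanSpace ℝ (Fin d)),
        Measurable Fε → Measurable Fε' →
        (∀ x, x ≠ 0 → ‖Fε x‖ ≤ Cstar / ‖x‖ ^ (d - 1)) →
        (∀ x, x ≠ 0 → ‖Fε' x‖ ≤ Cstar / ‖x‖ ^ (d - 1)) →
        (∀ x, ε ≤ ‖x‖ → Fε x = F x) →
        (∀ x, ε' ≤ ‖x‖ → Fε' x = F x) →
        ∀ (ρ : EuclideanSpace ℝ (Fin d) → ℝ) (M : ℝ),
          Measurable ρ → (∀ x, 0 ≤ ρ x) → (∀ x ∈ D, ρ x ≤ M) →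
          ∀ x ∈ D,
            ‖(∫ y in D, ρ y • Fε (x - y)) - ∫ y in D, ρ y • Fε' (x - y)‖
              ≤ C * ε * M := by
  have : Nontrivial (EuclideanSpace ℝ (Fin d)) := by
    have : Nonempty (Fin d) := ⟨⟨0, by omega⟩⟩
    infer_instance
  have hdim : finrank ℝ (EuclideanSpace ℝ (Fin d)) = d := finrank_euclideanSpace_fin
  have hCstar_pos : 0 < Cstar := hCstar ▸ div_pos (Gamma_pos_of_pos (by positivity)) (by positivity)
  have hV : 0 < volume.real (ball (0 : EuclideanSpace ℝ (Fin d)) 1) :=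
    ENNReal.toReal_pos (measure_ball_pos _ _ one_pos).ne' measure_ball_lt_top.ne
  refine ⟨2 * Cstar * d * volume.real (ball (0 : EuclideanSpace ℝ (Fin d)) 1),
    by positivity,
    fun ε ε' hε' hε'ε Fε Fε' hFε hFε' hFεC hFε'C hFεF hFε'F ρ M hρ hρ0 hρM x hx => ?_⟩
  have hFεFε' : ∀ z, ε ≤ ‖z‖ → Fε z = Fε' z :=
    fun z hz => (hFεF z hz).trans (hFε'F z (hε'ε.trans hz)).symm
  simpa only [hdim] using norm_setIntegral_smul_comp_sub_sub_le volume hFε hFε'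
    (by simpa only [hdim] using hFεC) (by simpa only [hdim] using hFε'C) (hε'.trans hε'ε) hFεFε'
    hDb hDm hρ hρ0 hρM ((hρ0 x).trans (hρM x hx)) x

/-- Comparison of two regularizations of the Newtonian force convolved with a bounded
density: there is a constant `C` depending only on `D` such that for all
`0 ≤ ε' ≤ ε`, `sup_{x ∈ D} |(F_ε * ρ)(x) − (F_{ε'} * ρ)(x)| ≤ C ε ‖ρ‖_∞`. -/
theorem convolution_force_regularization_difference
    (d : ℕ) (hd : 2 ≤ d)
    (Cstar : ℝ)
    (hCstar : Cstar = Real.Gamma ((d : ℝ) / 2) / (2 * π ^ ((d : ℝ) / 2)))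
    (F : EuclideanSpace ℝ (Fin d) → EuclideanSpace ℝ (Fin d))
    (hF : ∀ x, F x = (-(Cstar / ‖x‖ ^ d)) • x)
    (D : Set (EuclideanSpace ℝ (Fin d)))
    (hDb : Bornology.IsBounded D) (hDm : MeasurableSet D) :
    ∃ C : ℝ, 0 < C ∧
      ∀ (ε ε' : ℝ), 0 ≤ ε' → ε' ≤ ε →
      ∀ (Fε Fε' : EuclideanSpace ℝ (Fin d) → EuclideanSpace ℝ (Fin d)),
        Measurable Fε → Measurable Fε' →
        (∀ x, x ≠ 0 → ‖Fε x‖ ≤ Cstar / ‖x‖ ^ (d - 1)) →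
        (∀ x, x ≠ 0 → ‖Fε' x‖ ≤ Cstar / ‖x‖ ^ (d - 1)) →
        (∀ x, ε ≤ ‖x‖ → Fε x = F x) →
        (∀ x, ε' ≤ ‖x‖ → Fε' x = F x) →
        ∀ (ρ : EuclideanSpace ℝ (Fin d) → ℝ) (M : ℝ),
          Measurable ρ → (∀ x, 0 ≤ ρ x) → (∀ x ∈ D, ρ x ≤ M) →
          ∀ x ∈ D,
            ‖(∫ y in D, ρ y • Fε (x - y)) - ∫ y in D, ρ y • Fε' (x - y)‖
              ≤ C * ε * M :=
  convolution_force_regularization_difference_general d hd Cstar hCstar F D hDb hDm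
end

section
/- (Osgood/log-Gronwall estimate) Define ω(r) = r(1 − log r) for 0 < r < 1 and ω(r) = 1 for r ≥ 1. Let C, T > 0 and suppose a family of nonnegative continuous functions f_ε on [0,T] satisfies f_ε(t)^2 ≤ C ∫_0^t f_ε(s) ω(f_ε(s)) ds + C ω(ε) T for all t ∈ [0,T], where ε is small enough that C ω(ε) T < 1. Then there exist constants C_T > 0 and Λ_0 ∈ (0, 1/2), depending only on C and T, such that whenever ω(ε) ≤ Λ_0, sup_{t∈[0,T]} f_ε(t) ≤ C_T ω(ε)^{(1/2) e^{−CT}} < 1. -/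
/-!
The barrier `φ(t) = exp (1 - b e^{-Ct})` solves `φ' = C φ (1 - log φ) = C ω(φ)` while `φ ≤ 1`,
so `φ² = 2C ∫₀ᵗ φ ω(φ) + φ(0)²`. Taking `φ(0)² = 2A` with `A = C ω(ε) T`, `φ` is a strict
supersolution of the integral inequality, and since `r ↦ r ω(r)` is monotone on `[0, 1]`, `f` can
never reach `φ`: at a first contact time `t₁` one would get
`f(t₁)² ≤ C ∫₀^{t₁} φ ω(φ) + A = φ(t₁)² / 2 < φ(t₁)² ≤ f(t₁)²`.
Finally `φ(T) = e^{1 - β} (2A)^{β/2}` with `β = e^{-CT}`, which is the claimed rate.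
-/

open Real Set MeasureTheory intervalIntegral

noncomputable def logLipModulus (r : ℝ) : ℝ := if 1 ≤ r then 1 else r * (1 - log r)

lemma logLipModulus_of_le_one {r : ℝ} (hr : r ≤ 1) : logLipModulus r = r * (1 - log r) := by
  rcases hr.lt_or_eq with hr | rfl
  · exact if_neg hr.not_ge
  · simp [logLipModulus]

lemma logLipModulus_pos {r : ℝ} (hr : 0 < r) : 0 < logLipModulus r := by
  unfold logLipModulus
  split_ifs with h
  · exact one_pos
  · exact mul_pos hr (by linarith [log_neg hr (not_le.1 h)])

lemma continuous_mul_one_sub_log : Continuous fun r : ℝ => r * (1 - log r) :=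
  (continuous_id.sub continuous_mul_log).congr fun r => by simp only [Pi.sub_apply, id]; ring

@[fun_prop]
lemma continuous_logLipModulus : Continuous logLipModulus :=
  continuous_const.if_le continuous_mul_one_sub_log continuous_const continuous_id
    fun r hr => by simp [← hr]

lemma monotoneOn_mul_logLipModulus : MonotoneOn (fun r => r * logLipModulus r) (Icc 0 1) := by
  refine MonotoneOn.congr (f₁ := fun r => r * (r * (1 - log r))) ?_
    fun r hr => by simp only [logLipModulus_of_le_one hr.2]
  refine monotoneOn_of_hasDerivWithinAt_nonneg (f' := fun r => r * (1 - 2 * log r))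
    (convex_Icc 0 1) (continuous_id.mul continuous_mul_one_sub_log).continuousOn ?_ ?_
  · rw [interior_Icc]
    intro r hr
    have h : HasDerivAt (fun r => r * (r * (1 - log r))) _ r := (hasDerivAt_id' r).mul
      ((hasDerivAt_id' r).mul ((hasDerivAt_const r 1).sub (hasDerivAt_log hr.1.ne')))
    refine (h.congr_deriv ?_).hasDerivWithinAt
    linear_combination (-r) * mul_inv_cancel₀ hr.1.ne'
  · rw [interior_Icc]
    intro r hr
    exact mul_nonneg hr.1.le (by linarith [log_neg hr.1 hr.2])

lemma exists_first_le_of_continuousOn {f φ : ℝ → ℝ} {a b : ℝ}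
    (hf : ContinuousOn f (Icc a b)) (hφ : ContinuousOn φ (Icc a b))
    (h : ∃ t ∈ Icc a b, φ t ≤ f t) :
    ∃ t₁ ∈ Icc a b, φ t₁ ≤ f t₁ ∧ ∀ s ∈ Ico a t₁, f s < φ s := by
  have hS : IsClosed {t | t ∈ Icc a b ∧ φ t ≤ f t} := isClosed_Icc.isClosed_le hφ hf
  obtain ⟨t₁, ⟨ht₁, hle⟩, hmin⟩ :=
    (isCompact_Icc.of_isClosed_subset hS (sep_subset _ _)).exists_isLeast h
  refine ⟨t₁, ht₁, hle, fun s hs => lt_of_not_ge fun hs' => ?_⟩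
  exact (hmin ⟨⟨hs.1, hs.2.le.trans ht₁.2⟩, hs'⟩).not_gt hs.2

theorem lt_of_sq_le_integral_of_lt_sq {F f φ : ℝ → ℝ} {A T : ℝ}
    (hf : ContinuousOn f (Icc 0 T)) (hφ : ContinuousOn φ (Icc 0 T))
    (hFf : ContinuousOn (fun s => F (f s)) (Icc 0 T))
    (hFφ : ContinuousOn (fun s => F (φ s)) (Icc 0 T))
    (hφ0 : ∀ t ∈ Icc 0 T, 0 ≤ φ t)
    (hF : ∀ t ∈ Icc 0 T, f t < φ t → F (f t) ≤ F (φ t))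
    (hsub : ∀ t ∈ Icc 0 T, f t ^ 2 ≤ (∫ s in 0..t, F (f s)) + A)
    (hsuper : ∀ t ∈ Icc 0 T, (∫ s in 0..t, F (φ s)) + A < φ t ^ 2) :
    ∀ t ∈ Icc 0 T, f t < φ t := by
  by_contra! h
  obtain ⟨t₁, ht₁, hle, hlt⟩ := exists_first_le_of_continuousOn hf hφ h
  have hsubset : uIcc 0 t₁ ⊆ Icc 0 T := by
    rw [uIcc_of_le ht₁.1]
    exact Icc_subset_Icc le_rfl ht₁.2
  have hint : (∫ s in 0..t₁, F (f s)) ≤ ∫ s in 0..t₁, F (φ s) :=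
    integral_mono_on_of_le_Ioo ht₁.1 ((hFf.mono hsubset).intervalIntegrable)
      ((hFφ.mono hsubset).intervalIntegrable) fun s hs =>
        hF s ⟨hs.1.le, hs.2.le.trans ht₁.2⟩ (hlt s ⟨hs.1.le, hs.2⟩)
  have hsq : φ t₁ ^ 2 ≤ f t₁ ^ 2 := pow_le_pow_left₀ (hφ0 t₁ ht₁) hle 2
  linarith [hsub t₁ ht₁, hsuper t₁ ht₁]

/-- `log φ` solves `ψ' = C (1 - ψ)`, the logarithmic form of `φ' = C φ (1 - log φ)`. -/
noncomputable def osgoodBarrier (C b t : ℝ) : ℝ := exp (1 - b * exp (-C * t))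

section osgoodBarrier

variable {C b : ℝ}

@[fun_prop]
lemma continuous_osgoodBarrier : Continuous (osgoodBarrier C b) := by
  unfold osgoodBarrier
  fun_prop

lemma osgoodBarrier_pos (t : ℝ) : 0 < osgoodBarrier C b t := exp_pos _

lemma osgoodBarrier_zero : osgoodBarrier C b 0 = exp (1 - b) := by
  simp [osgoodBarrier]

lemma monotone_osgoodBarrier (hC : 0 ≤ C) (hb : 0 ≤ b) : Monotone (osgoodBarrier C b) :=
  fun s t hst => exp_le_exp.2 <| by
    have : exp (-C * t) ≤ exp (-C * s) := exp_le_exp.2 (by nlinarith)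
    nlinarith

lemma osgoodBarrier_le_one {T t : ℝ} (hC : 0 ≤ C) (hb : exp (C * T) ≤ b) (ht : t ≤ T) :
    osgoodBarrier C b t ≤ 1 := by
  have h : 1 ≤ exp (C * T) * exp (-C * t) := by
    rw [← exp_add]
    exact one_le_exp (by nlinarith)
  exact exp_le_one_iff.2 (by nlinarith [exp_pos (-C * t)])

lemma hasDerivAt_osgoodBarrier (t : ℝ) :
    HasDerivAt (osgoodBarrier C b)
      (C * (osgoodBarrier C b t * (1 - log (osgoodBarrier C b t)))) t := by
  have hlin : HasDerivAt (fun t : ℝ => -C * t) (-C) t := by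
    simpa using (hasDerivAt_id t).const_mul (-C)
  convert ((hlin.exp.const_mul b).const_sub 1).exp using 1
  · rfl
  simp only [osgoodBarrier, log_exp]
  ring

lemma integral_osgoodBarrier {T t : ℝ} (hC : 0 ≤ C) (hb : exp (C * T) ≤ b) (ht : t ∈ Icc 0 T) :
    ∫ s in 0..t, C * (osgoodBarrier C b s * logLipModulus (osgoodBarrier C b s)) =
      (osgoodBarrier C b t ^ 2 - osgoodBarrier C b 0 ^ 2) / 2 := by
  rw [sub_div]
  refine integral_eq_sub_of_hasDerivAt (f := fun s => osgoodBarrier C b s ^ 2 / 2)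
    (fun s hs => ?_) (by apply Continuous.intervalIntegrable; fun_prop)
  rw [uIcc_of_le ht.1] at hs
  rw [logLipModulus_of_le_one (osgoodBarrier_le_one hC hb (hs.2.trans ht.2))]
  have h : HasDerivAt (fun s => osgoodBarrier C b s ^ 2 / 2) _ s :=
    ((hasDerivAt_osgoodBarrier s).pow 2).div_const 2
  refine h.congr_deriv ?_
  push_cast
  ring

lemma osgoodBarrier_one_sub_log_div_two {a : ℝ} (ha : 0 < a) (t : ℝ) :
    osgoodBarrier C (1 - log a / 2) t = exp (1 - exp (-C * t)) * a ^ (1 / 2 * exp (-C * t)) := by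
  rw [osgoodBarrier, rpow_def_of_pos ha, ← exp_add]
  ring_nf

end osgoodBarrier

/-- The smallness condition on `A` makes `b = 1 - log (2A) / 2` at least `e^{CT}`, which keeps the
barrier `osgoodBarrier C b` below `1` on `[0, T]`. -/
theorem lt_of_sq_le_integral_mul_logLipModulus {C T A : ℝ} {f : ℝ → ℝ} (hC : 0 ≤ C) (hA : 0 < A)
    (hAT : 2 * A ≤ exp (2 - 2 * exp (C * T)))
    (hf : ContinuousOn f (Icc 0 T)) (hf0 : ∀ t ∈ Icc 0 T, 0 ≤ f t)
    (hsub : ∀ t ∈ Icc 0 T, f t ^ 2 ≤ C * (∫ s in 0..t, f s * logLipModulus (f s)) + A) :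
    ∀ t ∈ Icc 0 T, f t < exp (1 - exp (-C * T)) * (2 * A) ^ (1 / 2 * exp (-C * T)) := by
  have hb : exp (C * T) ≤ 1 - log (2 * A) / 2 := by
    have := (log_le_iff_le_exp (by positivity)).2 hAT
    linarith
  set b := 1 - log (2 * A) / 2
  have hφ0 : osgoodBarrier C b 0 ^ 2 = 2 * A := by
    rw [osgoodBarrier_zero, ← exp_nat_mul, ← exp_log (by positivity : 0 < 2 * A)]
    congr 1
    push_cast
    ring
  have hlt : ∀ t ∈ Icc 0 T, f t < osgoodBarrier C b t := by
    refine lt_of_sq_le_integral_of_lt_sq (F := fun x => C * (x * logLipModulus x)) (A := A) hf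
      (by fun_prop) (by fun_prop) (by fun_prop) (fun t _ => (osgoodBarrier_pos t).le) ?_ ?_ ?_
    · intro t ht hlt
      have hφ1 := osgoodBarrier_le_one hC hb ht.2
      exact mul_le_mul_of_nonneg_left (monotoneOn_mul_logLipModulus
        ⟨hf0 t ht, hlt.le.trans hφ1⟩ ⟨(osgoodBarrier_pos t).le, hφ1⟩ hlt.le) hC
    · intro t ht
      rw [intervalIntegral.integral_const_mul]
      exact hsub t ht
    · intro t ht
      rw [integral_osgoodBarrier hC hb ht, hφ0]
      nlinarith [osgoodBarrier_pos (C := C) (b := b) t]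
  intro t ht
  rw [← osgoodBarrier_one_sub_log_div_two (by positivity)]
  exact (hlt t ht).trans_le
    (monotone_osgoodBarrier hC (by linarith [exp_pos (C * T)]) ht.2)

lemma mul_rpow_le_half {c x p : ℝ} (hc : 0 < c) (hp : 0 < p) (hx : 0 ≤ x)
    (h : x ≤ (2 * c) ^ (-1 / p)) : c * x ^ p ≤ 1 / 2 := by
  calc c * x ^ p ≤ c * ((2 * c) ^ (-1 / p)) ^ p := by gcongr
    _ = 1 / 2 := by
      rw [← rpow_mul (by positivity), div_mul_cancel₀ _ hp.ne', rpow_neg_one]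
      field_simp

/-- Osgood/log-Gronwall estimate with the log-Lipschitz modulus
`ω(r) = r(1 − log r)` for `0 < r < 1`, `ω(r) = 1` for `r ≥ 1`: a family of
nonnegative continuous functions satisfying
`f_ε(t)² ≤ C ∫_0^t f_ε ω(f_ε) + C ω(ε) T` obeys the uniform rate
`sup_{[0,T]} f_ε ≤ C_T ω(ε)^{(1/2)e^{−CT}} < 1` whenever `ω(ε) ≤ Λ₀`. -/
theorem osgood_log_gronwall
    (w : ℝ → ℝ)
    (hw : ∀ r : ℝ, w r = if 1 ≤ r then 1 else r * (1 - Real.log r))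
    (C T : ℝ) (hC : 0 < C) (hT : 0 < T) :
    ∃ C_T : ℝ, 0 < C_T ∧ ∃ Λ0 : ℝ, 0 < Λ0 ∧ Λ0 < 1 / 2 ∧
      ∀ (ε : ℝ) (f : ℝ → ℝ), 0 < ε →
        ContinuousOn f (Set.Icc 0 T) →
        (∀ t ∈ Set.Icc (0 : ℝ) T, 0 ≤ f t) →
        C * w ε * T < 1 →
        (∀ t ∈ Set.Icc (0 : ℝ) T,
          (f t) ^ 2 ≤ (C * ∫ s in (0 : ℝ)..t, f s * w (f s)) + C * w ε * T) →
        w ε ≤ Λ0 →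
        ∀ t ∈ Set.Icc (0 : ℝ) T,
          f t ≤ C_T * (w ε) ^ ((1 / 2) * Real.exp (-C * T)) ∧
          C_T * (w ε) ^ ((1 / 2) * Real.exp (-C * T)) < 1 := by
  obtain rfl : w = logLipModulus := funext hw
  set β := exp (-C * T)
  set C_T := exp 1 * (2 * C * T) ^ (1 / 2 * β)
  have hβ : 0 < β := exp_pos _
  have hCT : 0 < C_T := by positivity
  refine ⟨C_T, hCT, min (1 / 4) (min (exp (2 - 2 * exp (C * T)) / (2 * C * T))
    ((2 * C_T) ^ (-1 / (1 / 2 * β)))), by positivity, (min_le_left _ _).trans_lt (by norm_num), ?_⟩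
  intro ε f hε hf hf0 _ hsub hΛ t ht
  set ω := logLipModulus ε
  have hω : 0 < ω := logLipModulus_pos hε
  have hA : 2 * (C * ω * T) ≤ exp (2 - 2 * exp (C * T)) := by
    have := hΛ.trans ((min_le_right _ _).trans (min_le_left _ _))
    rw [le_div_iff₀ (by positivity)] at this
    linarith
  have hft := lt_of_sq_le_integral_mul_logLipModulus hC.le (by positivity) hA hf hf0 hsub t ht
  constructor
  · calc f t ≤ exp (1 - β) * (2 * (C * ω * T)) ^ (1 / 2 * β) := hft.le
      _ = exp (1 - β) * ((2 * C * T) ^ (1 / 2 * β) * ω ^ (1 / 2 * β)) := by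
          rw [← mul_rpow (by positivity) hω.le]
          ring_nf
      _ ≤ exp 1 * (2 * C * T) ^ (1 / 2 * β) * ω ^ (1 / 2 * β) := by
          rw [← mul_assoc]
          gcongr
          linarith [exp_pos (-C * T)]
  · exact (mul_rpow_le_half hCT (by positivity) hω.le <|
      hΛ.trans ((min_le_right _ _).trans (min_le_right _ _))).trans_lt (by norm_num)
end
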